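/- If an infinite discrete group H of isometries of ℝ² is abelian and torsion-free, then H is generated by elements that are translations or glide reflections; in particular H contains a translation. -/

import Mathlib

noncomputable section

/-- The Euclidean plane. -/
abbrev Plane := EuclideanSpace ℝ (Fin 2)

/-- The isometry group of the Euclidean plane. -/
abbrev Isom := Plane ≃ᵢ Plane

/-- The compact-open topology on the isometry group. -/
instance : TopologicalSpace Isom :=
  TopologicalSpace.induced (fun f => (⟨f, f.continuous⟩ : C(Plane, Plane))) ContinuousMap.compactOpen

/-- A (nontrivial) translation: `x ↦ x + v` with `v ≠ 0`. -/
def IsTranslation (f : Isom) : Prop := ∃ v : Plane, v ≠ 0 ∧ ∀ x, f x = x + v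

/-- The linear part of an isometry of the plane (via Mazur–Ulam). -/
def linPart (f : Isom) : Plane ≃ₗᵢ[ℝ] Plane := f.toRealAffineIsometryEquiv.linearIsometryEquiv

/-- An isometry is orientation-reversing if its linear part has determinant `-1`. -/
def IsOrientationReversing (f : Isom) : Prop :=
  LinearMap.det ((linPart f).toLinearEquiv : Plane →ₗ[ℝ] Plane) = -1

/-- A glide reflection: an orientation-reversing isometry whose square is a
nontrivial translation. -/
def IsGlide (f : Isom) : Prop := IsOrientationReversing f ∧ IsTranslation (f * f)

/-! If some `f ∈ H` had linear part of determinant `1` other than the identity, `f` would be a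
rotation with a unique fixed point `p`. Every element of the abelian group `H` commutes with `f`,
hence fixes `p`. An isometry fixing `p` is determined by its linear part, and linear isometries
form a compact set; so an infinite `H` contains two distinct elements whose quotient moves every
point of a given compact set arbitrarily little, which contradicts discreteness. Hence every
`f ≠ 1` in `H` is a translation, or has linear part of determinant `-1`; in the latter case the
linear part is a reflection, `f * f` is a translation, and `f * f ≠ 1` since `H` is torsion-free. -/

open Module Metric Topology Filter

theorem TotallyBounded.exists_ne_dist_lt {ι X : Type*} [PseudoMetricSpace X] [Infinite ι]
    {u : ι → X} (hu : TotallyBounded (Set.range u)) {ε : ℝ} (hε : 0 < ε) :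
    ∃ i j, i ≠ j ∧ dist (u i) (u j) < ε := by
  obtain ⟨t, ht, hcover⟩ := totallyBounded_iff.mp hu (ε / 2) (half_pos hε)
  have : Finite t := ht
  choose c hct hc using fun i => Set.mem_iUnion₂.mp (hcover (Set.mem_range_self i))
  obtain ⟨i, j, hij, hc_eq⟩ := Finite.exists_ne_map_eq_of_infinite fun i => (⟨c i, hct i⟩ : t)
  have hcij : c i = c j := congrArg Subtype.val hc_eq
  refine ⟨i, j, hij, ?_⟩
  calc dist (u i) (u j) ≤ dist (u i) (c i) + dist (u j) (c j) := by
        rw [hcij]; exact dist_triangle_right _ _ _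
    _ < ε / 2 + ε / 2 := add_lt_add (hc i) (hc j)
    _ = ε := add_halves ε

theorem Subgroup.closure_setOf_mem_and_eq {G : Type*} [Group G] (H : Subgroup G) {P : G → Prop}
    (hP : ∀ g ∈ H, g ≠ 1 → P g) : Subgroup.closure {g | g ∈ H ∧ P g} = H := by
  refine le_antisymm ((Subgroup.closure_le H).mpr fun g hg => hg.1) fun g hg => ?_
  obtain rfl | hg1 := eq_or_ne g 1
  · exact one_mem _
  · exact Subgroup.subset_closure ⟨hg, hP g hg hg1⟩

namespace LinearIsometryEquiv

section

variable {V : Type*} [NormedAddCommGroup V] [InnerProductSpace ℝ V]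

theorem det_trans (f g : V ≃ₗᵢ[ℝ] V) :
    LinearMap.det ((f.trans g).toLinearEquiv : V →ₗ[ℝ] V) =
      LinearMap.det (g.toLinearEquiv : V →ₗ[ℝ] V) * LinearMap.det (f.toLinearEquiv : V →ₗ[ℝ] V) :=
  LinearMap.det_comp _ _

theorem det_eq_one_or_eq_neg_one [FiniteDimensional ℝ V] (f : V ≃ₗᵢ[ℝ] V) :
    LinearMap.det (f.toLinearEquiv : V →ₗ[ℝ] V) = 1 ∨
      LinearMap.det (f.toLinearEquiv : V →ₗ[ℝ] V) = -1 := by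
  have := f.toLinearIsometry.normDet_eq_one
  rwa [LinearMap.normDet_eq_abs_det, abs_eq zero_le_one] at this

variable [Fact (finrank ℝ V = 2)]

attribute [local instance] FiniteDimensional.of_fact_finrank_eq_two

theorem eq_refl_of_det_eq_one_of_apply_eq_self {f : V ≃ₗᵢ[ℝ] V}
    (hdet : LinearMap.det (f.toLinearEquiv : V →ₗ[ℝ] V) = 1) {v : V} (hv : v ≠ 0)
    (hfv : f v = v) : f = LinearIsometryEquiv.refl ℝ V := by
  let o : Orientation ℝ V (Fin 2) := (finBasisOfFinrankEq ℝ V Fact.out).orientation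
  obtain ⟨θ, rfl⟩ := o.exists_linearIsometryEquiv_eq_of_det_pos (hdet ▸ one_pos)
  obtain rfl : θ = 0 := ((o.rotation_eq_self_iff v θ).mp hfv).resolve_left hv
  exact o.rotation_zero

theorem trans_self_eq_refl_of_det_eq_neg_one {f : V ≃ₗᵢ[ℝ] V}
    (hdet : LinearMap.det (f.toLinearEquiv : V →ₗ[ℝ] V) = -1) :
    f.trans f = LinearIsometryEquiv.refl ℝ V := by
  have : Nontrivial V := nontrivial_of_finrank_eq_succ (Fact.out : finrank ℝ V = 2)
  obtain ⟨x, hx⟩ := exists_ne (0 : V)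
  by_cases hfx : f x = x
  · refine eq_refl_of_det_eq_one_of_apply_eq_self ?_ hx (by simp [hfx])
    rw [det_trans, hdet]; norm_num
  -- the reflection `r` exchanging `x` and `f x`: `f.trans r` fixes `x` and has determinant `1`
  set r := (ℝ ∙ (f x - x))ᗮ.reflection
  have hrfx : r (f x) = x := Submodule.reflection_sub (f.norm_map x)
  have hdet_r : LinearMap.det (r.toLinearEquiv : V →ₗ[ℝ] V) = -1 := by
    rw [Submodule.det_reflection, Submodule.orthogonal_orthogonal,
      finrank_span_singleton (sub_ne_zero.mpr hfx), pow_one]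
  have hfr : f.trans r = LinearIsometryEquiv.refl ℝ V := by
    refine eq_refl_of_det_eq_one_of_apply_eq_self ?_ hx hrfx
    rw [det_trans, hdet, hdet_r]; norm_num
  have hf : f = r := ext fun y => by
    have hy : r (f y) = y := DFunLike.congr_fun hfr y
    conv_rhs => rw [← hy]
    exact (Submodule.reflection_reflection _ _).symm
  rw [hf]
  exact Submodule.reflection_trans_reflection _

end

end LinearIsometryEquiv

instance : Fact (finrank ℝ Plane = 2) := ⟨finrank_euclideanSpace_fin⟩

theorem linPart_sub (f : Isom) (x y : Plane) : linPart f (x - y) = f x - f y :=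
  f.toRealAffineIsometryEquiv.map_vsub x y

theorem apply_eq_linPart_add (f : Isom) (x : Plane) : f x = linPart f x + f 0 := by
  rw [← sub_eq_iff_eq_add, ← linPart_sub, sub_zero]

theorem apply_eq_linPart_sub_add_of_apply_eq_self (f : Isom) {p : Plane} (hp : f p = p)
    (x : Plane) : f x = linPart f (x - p) + p := by
  rw [linPart_sub, hp, sub_add_cancel]

theorem linPart_mul (f g : Isom) : linPart (f * g) = (linPart g).trans (linPart f) :=
  LinearIsometryEquiv.ext fun x => by
    rw [LinearIsometryEquiv.trans_apply, ← sub_zero x, linPart_sub, linPart_sub, linPart_sub]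
    rfl

theorem isTranslation_of_linPart_eq_refl {f : Isom} (hf : f ≠ 1)
    (hA : linPart f = LinearIsometryEquiv.refl ℝ Plane) : IsTranslation f := by
  have hfx : ∀ x, f x = x + f 0 := fun x => by
    rw [apply_eq_linPart_add, hA]
    rfl
  refine ⟨f 0, fun h0 => hf (IsometryEquiv.ext fun x => ?_), hfx⟩
  rw [hfx, h0, add_zero]
  rfl

theorem IsOrientationReversing.isGlide {f : Isom} (hrev : IsOrientationReversing f)
    (hf2 : f * f ≠ 1) : IsGlide f :=
  ⟨hrev, isTranslation_of_linPart_eq_refl hf2 <| by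
    rw [linPart_mul]; exact LinearIsometryEquiv.trans_self_eq_refl_of_det_eq_neg_one hrev⟩

theorem apply_eq_self_iff_sub_linPart (f : Isom) (p : Plane) :
    f p = p ↔ p - linPart f p = f 0 := by
  rw [sub_eq_iff_eq_add', ← apply_eq_linPart_add, eq_comm]

theorem existsUnique_apply_eq_self_of_det_eq_one {f : Isom}
    (hdet : LinearMap.det ((linPart f).toLinearEquiv : Plane →ₗ[ℝ] Plane) = 1)
    (hA : linPart f ≠ LinearIsometryEquiv.refl ℝ Plane) : ∃! p, f p = p := by
  let L : Plane →ₗ[ℝ] Plane := LinearMap.id - ((linPart f).toLinearEquiv : Plane →ₗ[ℝ] Plane)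
  have hinj : Function.Injective L := by
    refine (injective_iff_map_eq_zero L).mpr fun v hv => by_contra fun hv0 => hA ?_
    exact LinearIsometryEquiv.eq_refl_of_det_eq_one_of_apply_eq_self hdet hv0
      (sub_eq_zero.mp hv).symm
  obtain ⟨p, hp, huniq⟩ := (Function.bijective_iff_existsUnique L).mp
    ⟨hinj, LinearMap.injective_iff_surjective.mp hinj⟩ (f 0)
  exact ⟨p, (apply_eq_self_iff_sub_linPart f p).mpr hp,
    fun q hq => huniq q ((apply_eq_self_iff_sub_linPart f q).mp hq)⟩

theorem isTranslation_or_isGlide_or_existsUnique_apply_eq_self {f : Isom} (hf : f ≠ 1)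
    (hf2 : f * f ≠ 1) : IsTranslation f ∨ IsGlide f ∨ ∃! p, f p = p := by
  rcases (linPart f).det_eq_one_or_eq_neg_one with hdet | hdet
  · by_cases hA : linPart f = LinearIsometryEquiv.refl ℝ Plane
    · exact .inl (isTranslation_of_linPart_eq_refl hf hA)
    · exact .inr (.inr (existsUnique_apply_eq_self_of_det_eq_one hdet hA))
  · exact .inr (.inl (IsOrientationReversing.isGlide hdet hf2))

theorem exists_isCompact_forall_dist_lt_imp_eq_one (H : Subgroup Isom) [DiscreteTopology H] :
    ∃ K : Set Plane, IsCompact K ∧ ∃ ε > 0, ∀ g ∈ H, (∀ x ∈ K, dist (g x) x < ε) → g = 1 := by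
  have hbasis : (𝓝 (1 : H)).HasBasis (fun p : Set Plane × ℝ => IsCompact p.1 ∧ 0 < p.2)
      fun p => {g : H | ∀ x ∈ p.1, dist x ((g : Isom) x) < p.2} := by
    rw [nhds_subtype, nhds_induced]
    exact ((nhds_basis_uniformity'
      uniformity_basis_dist.compactConvergenceUniformity).comap _).comap _
  obtain ⟨⟨K, ε⟩, ⟨hK, hε⟩, hsub⟩ :=
    hbasis.mem_iff.mp (discreteTopology_iff_singleton_mem_nhds.mp ‹_› 1)
  refine ⟨K, hK, ε, hε, fun g hg hgK => ?_⟩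
  have : (⟨g, hg⟩ : H) = 1 := hsub fun x hx => by rw [dist_comm]; exact hgK x hx
  exact congrArg Subtype.val this

theorem finite_of_forall_apply_eq_self (H : Subgroup Isom) [DiscreteTopology H] (p : Plane)
    (hp : ∀ g ∈ H, g p = p) : Finite H := by
  obtain ⟨K, hK, ε, hε, hK1⟩ := exists_isCompact_forall_dist_lt_imp_eq_one H
  obtain ⟨R, hR, hKR⟩ := hK.isBounded.subset_closedBall_lt 0 p
  by_contra hfin
  have : Infinite H := not_finite_iff_infinite.mp hfin
  let u : H → Plane →L[ℝ] Plane := fun g => (linPart g).toLinearIsometry.toContinuousLinearMap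
  have hu : TotallyBounded (Set.range u) :=
    (isCompact_closedBall 0 1).totallyBounded.subset <| Set.range_subset_iff.mpr fun g =>
      mem_closedBall_zero_iff.mpr (LinearIsometry.norm_toContinuousLinearMap_le _)
  obtain ⟨g, h, hgh, hd⟩ := hu.exists_ne_dist_lt (div_pos hε hR)
  refine hgh (Subtype.ext (inv_mul_eq_one.mp
    (hK1 _ (mul_mem (inv_mem h.2) g.2) fun x hx => ?_))).symm
  have hxR : ‖x - p‖ ≤ R := mem_closedBall_iff_norm.mp (hKR hx)
  calc dist (((h : Isom)⁻¹ * g) x) x = dist ((g : Isom) x) ((h : Isom) x) := by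
        rw [← (h : Isom).dist_eq, IsometryEquiv.mul_apply, IsometryEquiv.apply_inv_self]
    _ = ‖(u g - u h) (x - p)‖ := by
        rw [dist_eq_norm, apply_eq_linPart_sub_add_of_apply_eq_self _ (hp g g.2),
          apply_eq_linPart_sub_add_of_apply_eq_self _ (hp h h.2)]
        simp [u]
    _ ≤ ‖u g - u h‖ * ‖x - p‖ := (u g - u h).le_opNorm _
    _ ≤ ‖u g - u h‖ * R := by gcongr
    _ < ε / R * R := by gcongr; rwa [← dist_eq_norm]
    _ = ε := div_mul_cancel₀ ε hR.ne'

/-- An infinite discrete abelian torsion-free group of isometries of `ℝ²` is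
generated by translations and glide reflections; in particular it contains a
translation. -/
theorem abelian_torsionfree_generated_by_translations_glides
    (H : Subgroup Isom) (hinf : Infinite H) (hdisc : DiscreteTopology H)
    (hab : ∀ f ∈ H, ∀ g ∈ H, f * g = g * f)
    (htf : ∀ f ∈ H, f ≠ 1 → ∀ n : ℕ, 0 < n → f ^ n ≠ 1) :
    Subgroup.closure {f : Isom | f ∈ H ∧ (IsTranslation f ∨ IsGlide f)} = H ∧
      ∃ f ∈ H, IsTranslation f := by
  have key : ∀ f ∈ H, f ≠ 1 → IsTranslation f ∨ IsGlide f := by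
    intro f hf hf1
    have hf2 : f * f ≠ 1 := by simpa only [pow_two] using htf f hf hf1 2 two_pos
    rcases isTranslation_or_isGlide_or_existsUnique_apply_eq_self hf1 hf2 with
      htr | hgl | ⟨p, hp, huniq⟩
    · exact .inl htr
    · exact .inr hgl
    · have hfix : ∀ g ∈ H, g p = p := fun g hg => huniq (g p) <| show f (g p) = g p by
        rw [← IsometryEquiv.mul_apply, hab f hf g hg, IsometryEquiv.mul_apply, hp]
      exact (not_finite_iff_infinite.mpr hinf (finite_of_forall_apply_eq_self H p hfix)).elim
  refine ⟨Subgroup.closure_setOf_mem_and_eq H key, ?_⟩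
  obtain ⟨f, hf, hf1⟩ := (Subgroup.nontrivial_iff_exists_ne_one H).mp inferInstance
  rcases key f hf hf1 with htr | hgl
  · exact ⟨f, hf, htr⟩
  · exact ⟨f * f, mul_mem hf hf, hgl.2⟩
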